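/- If the gain signed graph Υ is hyperfrustrated, then every maximal hyperbalanced edge set A is a coatom of the lattice of flats of M(Υ), with b_Σ(A) = b_Σ(E) and rk_Υ(A) = rk_Υ(E) − 1 = n − b_Σ(E). -/

import Mathlib

/- A formalization framework for gain signed graphs (Anderson–Su–Zaslavsky).
A graph may have links/loops (ordered pair of endpoints), half edges and loose
edges.  Edges carry a sign, an orientation (a sign at each end) and a gain in an
abelian group, recorded relative to the stored orientation. -/

namespace GSG

inductive EdgeEnds (V : Type*) where
  | link : V → V → EdgeEnds V
  | half : V → EdgeEnds V
  | loose : EdgeEnds V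

/-- A gain signed graph (data part; well-formedness is `Proper`). -/
structure GSGraph (V E G : Type*) [AddCommGroup G] where
  shape : E → EdgeEnds V
  sign : E → ℤˣ
  tau1 : E → ℤˣ
  tau2 : E → ℤˣ
  gain : E → G

/-- A directed step: an edge traversed forwards or backwards
(relative to the recorded order of its endpoints). -/
structure DStep (E : Type*) where
  edge : E
  fwd : Bool

/-- The reverse of a walk. -/
def revWalk {E : Type*} (W : List (DStep E)) : List (DStep E) :=
  (W.map fun d => ⟨d.edge, !d.fwd⟩).reverse

/-- The edge set of a walk. -/
def stepEdges {E : Type*} (W : List (DStep E)) : Set E := {e | e ∈ W.map DStep.edge}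

/-- An ultrawalk: a walk together with an optional initial and final half edge. -/
structure UWalk (V E : Type*) where
  firstHalf : Option E
  startV : V
  steps : List (DStep E)
  endV : V
  lastHalf : Option E

/-- The edge set of an ultrawalk. -/
def uedges {V E : Type*} (W : UWalk V E) : Set E :=
  {e | W.firstHalf = some e ∨ e ∈ W.steps.map DStep.edge ∨ W.lastHalf = some e}

namespace GSGraph

variable {V E G : Type*} [AddCommGroup G] (Υ : GSGraph V E G)

/-- Well-formedness: the two end-signs of a link or loop multiply to minus the
edge sign; half edges are negative; loose edges are positive. -/
def Proper : Prop :=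
  (∀ e v w, Υ.shape e = .link v w → Υ.tau1 e * Υ.tau2 e = - Υ.sign e) ∧
  (∀ e v, Υ.shape e = .half v → Υ.sign e = -1) ∧
  (∀ e, Υ.shape e = .loose → Υ.sign e = 1)

/-- Source vertex of a directed step (defined for links/loops). -/
def srcO (d : DStep E) : Option V :=
  match Υ.shape d.edge with
  | .link v w => some (if d.fwd then v else w)
  | _ => none

/-- Target vertex of a directed step. -/
def tgtO (d : DStep E) : Option V :=
  match Υ.shape d.edge with
  | .link v w => some (if d.fwd then w else v)
  | _ => none

/-- The orientation sign at the source end of a step. -/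
def tauSrc (d : DStep E) : ℤˣ := if d.fwd then Υ.tau1 d.edge else Υ.tau2 d.edge

/-- The orientation sign at the target end of a step. -/
def tauTgt (d : DStep E) : ℤˣ := if d.fwd then Υ.tau2 d.edge else Υ.tau1 d.edge

/-- `W` is a walk: all its edges are links or loops and consecutive steps chain. -/
def IsSteps (W : List (DStep E)) : Prop :=
  (∀ d ∈ W, ∃ v w, Υ.shape d.edge = .link v w) ∧
  List.Chain' (fun a b => Υ.tgtO a = Υ.srcO b) W

def headSrc (W : List (DStep E)) : Option V := W.head?.bind Υ.srcO

def lastTgt (W : List (DStep E)) : Option V := W.getLast?.bind Υ.tgtO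

/-- The sign of a walk: product of edge signs. -/
def walkSign (W : List (DStep E)) : ℤˣ := (W.map fun d => Υ.sign d.edge).prod

/-- The gain of a walk:
`φ(W) = −∑ φ(eᵢ)·σ(W_{0,i−1})·τ(u_{i−1},eᵢ)`, in recursive form. -/
def walkGain : List (DStep E) → G
  | [] => 0
  | d :: rest =>
      -((Υ.tauSrc d : ℤ) • Υ.gain d.edge) + (Υ.sign d.edge : ℤ) • walkGain rest

def stepVerts (W : List (DStep E)) : Set V := {v | some v ∈ W.map Υ.srcO}

def pathVerts (W : List (DStep E)) : Set V :=
  Υ.stepVerts W ∪ {v | some v = Υ.lastTgt W}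

/-- `W` is a (possibly empty) walk from `u` to `v`. -/
def FromTo (W : List (DStep E)) (u v : V) : Prop :=
  (W = [] → u = v) ∧ (W ≠ [] → Υ.headSrc W = some u ∧ Υ.lastTgt W = some v)

/-- A closed walk tracing a circle: no repeated edges, no repeated vertices. -/
def IsCircleWalk (W : List (DStep E)) : Prop :=
  W ≠ [] ∧ Υ.IsSteps W ∧ Υ.lastTgt W = Υ.headSrc W ∧
  (W.map DStep.edge).Nodup ∧ (W.map Υ.srcO).Nodup

/-- A walk tracing a path: no repeated edges or vertices. -/
def IsPathWalk (W : List (DStep E)) : Prop :=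
  Υ.IsSteps W ∧ (W.map DStep.edge).Nodup ∧
  (W.map Υ.srcO ++ [Υ.lastTgt W]).Nodup

/-- Well-formedness of an ultrawalk. -/
def IsUWalk (W : UWalk V E) : Prop :=
  Υ.IsSteps W.steps ∧ Υ.FromTo W.steps W.startV W.endV ∧
  (∀ e, W.firstHalf = some e → Υ.shape e = .half W.startV) ∧
  (∀ e, W.lastHalf = some e → Υ.shape e = .half W.endV)

/-- The gain of an ultrawalk:
`φ(W) = τ(u₀,e₀)φ(e₀) + φ(W₀ₗ) − φ(e_{l+1})·σ(W₀ₗ)·τ(u_l,e_{l+1})`. -/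
def ugain (W : UWalk V E) : G :=
  (match W.firstHalf with
   | some e => (Υ.tau1 e : ℤ) • Υ.gain e
   | none => 0)
  + Υ.walkGain W.steps
  + (match W.lastHalf with
     | some e => -(((Υ.walkSign W.steps * Υ.tau1 e : ℤˣ) : ℤ) • Υ.gain e)
     | none => 0)

/-- A circuit walk around a positive circle. -/
def IsPosCircleWalk (W : UWalk V E) : Prop :=
  W.firstHalf = none ∧ W.lastHalf = none ∧ Υ.IsCircleWalk W.steps ∧
  Υ.walkSign W.steps = 1 ∧ Υ.headSrc W.steps = some W.startV ∧ W.endV = W.startV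

/-- A circuit walk around a handcuff whose two figures (circles or half edges)
have signs `s₁` and `s₂` (a half-edge figure counts as sign `-1`).  The three
cases: circle–circle, half-edge–circle, half-edge–half-edge. -/
def IsHandcuffWalk (s₁ s₂ : ℤˣ) (W : UWalk V E) : Prop :=
  (∃ W₁ P W₂ u₁ u₂,
    W.firstHalf = none ∧ W.lastHalf = none ∧
    W.steps = W₁ ++ P ++ W₂ ++ revWalk P ∧
    Υ.IsSteps W.steps ∧
    Υ.IsCircleWalk W₁ ∧ Υ.walkSign W₁ = s₁ ∧ Υ.headSrc W₁ = some u₁ ∧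
    Υ.IsCircleWalk W₂ ∧ Υ.walkSign W₂ = s₂ ∧ Υ.headSrc W₂ = some u₂ ∧
    Υ.IsPathWalk P ∧ Υ.FromTo P u₁ u₂ ∧
    W.startV = u₁ ∧ W.endV = u₁ ∧
    (∀ x, x ∈ Υ.stepVerts W₁ → x ∈ Υ.stepVerts W₂ → P = [] ∧ x = u₁) ∧
    (∀ x, x ∈ Υ.pathVerts P →
      (x ∈ Υ.stepVerts W₁ → x = u₁) ∧ (x ∈ Υ.stepVerts W₂ → x = u₂)) ∧
    ((W₁ ++ P ++ W₂).map DStep.edge).Nodup) ∨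
  (∃ e₁ P W₂ u₂,
    W.firstHalf = some e₁ ∧ W.lastHalf = some e₁ ∧
    Υ.shape e₁ = .half W.startV ∧ W.endV = W.startV ∧ s₁ = -1 ∧
    W.steps = P ++ W₂ ++ revWalk P ∧ Υ.IsSteps W.steps ∧
    Υ.IsCircleWalk W₂ ∧ Υ.walkSign W₂ = s₂ ∧ Υ.headSrc W₂ = some u₂ ∧
    Υ.IsPathWalk P ∧ Υ.FromTo P W.startV u₂ ∧
    (∀ x, x ∈ Υ.pathVerts P → x ∈ Υ.stepVerts W₂ → x = u₂) ∧
    (W.startV ∈ Υ.stepVerts W₂ → P = []) ∧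
    ((P ++ W₂).map DStep.edge).Nodup) ∨
  (∃ e₁ e₂,
    W.firstHalf = some e₁ ∧ W.lastHalf = some e₂ ∧ e₁ ≠ e₂ ∧
    Υ.shape e₁ = .half W.startV ∧ Υ.shape e₂ = .half W.endV ∧
    s₁ = -1 ∧ s₂ = -1 ∧
    Υ.IsPathWalk W.steps ∧ Υ.FromTo W.steps W.startV W.endV)

/-- A circuit walk of a sign circuit: a positive circle, or a handcuff of two
negative figures (loose-edge circuits are handled separately). -/
def IsSignCircuitWalk (W : UWalk V E) : Prop :=
  Υ.IsPosCircleWalk W ∨ Υ.IsHandcuffWalk (-1) (-1) W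

/-- `C` is a sign circuit: a loose edge, a positive circle, or a handcuff of
two negative figures joined by a minimal path. -/
def SignCircuit (C : Set E) : Prop :=
  (∃ e, Υ.shape e = .loose ∧ C = {e}) ∨
  (∃ W : UWalk V E, Υ.IsSignCircuitWalk W ∧ uedges W = C)

/-- `C` is neutral: every way of computing its gain gives `0`. -/
def NeutralOn (C : Set E) : Prop :=
  (∀ e, Υ.shape e = .loose → C = {e} → Υ.gain e = 0) ∧
  (∀ W : UWalk V E, Υ.IsSignCircuitWalk W → uedges W = C → Υ.ugain W = 0)

/-- An edge set is hyperbalanced if every sign circuit contained in it is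
neutral. -/
def Hyperbalanced (S : Set E) : Prop :=
  ∀ C, C ⊆ S → Υ.SignCircuit C → Υ.NeutralOn C

/-- Adjacency through an edge of `S`. -/
def joined (S : Set E) (a b : V) : Prop :=
  ∃ e ∈ S, Υ.shape e = .link a b ∨ Υ.shape e = .link b a

/-- Connectivity in the spanning subgraph `(V, S)`. -/
def conn (S : Set E) : V → V → Prop := Relation.ReflTransGen (Υ.joined S)

/-- The vertex component of `v` in `(V, S)`. -/
def comp (S : Set E) (v : V) : Set V := {w | Υ.conn S v w}

/-- Incidence of an edge with a vertex. -/
def touches (e : E) (v : V) : Prop :=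
  match Υ.shape e with
  | .link a b => v = a ∨ v = b
  | .half a => v = a
  | .loose => False

/-- The component of `v` in `(V,S)` is sign-balanced: it contains no half edge
and no negative circle. -/
def BalancedAt (S : Set E) (v : V) : Prop :=
  (∀ e ∈ S, ∀ u, Υ.shape e = .half u → ¬ Υ.conn S v u) ∧
  (∀ W : List (DStep E), Υ.IsCircleWalk W → (∀ d ∈ W, d.edge ∈ S) →
     (∃ u, Υ.headSrc W = some u ∧ Υ.conn S v u) → Υ.walkSign W = 1)

/-- Number of sign-balanced components of `(V,S)`. -/
noncomputable def bBal (S : Set E) : ℕ :=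
  Nat.card {X : Set V // ∃ v, X = Υ.comp S v ∧ Υ.BalancedAt S v}

/-- Number of components of `(V,S)`. -/
noncomputable def nComp (S : Set E) : ℕ :=
  Nat.card {X : Set V // ∃ v, X = Υ.comp S v}

/-- `δ(S)`: 0 if `S` is hyperbalanced, 1 if hyperfrustrated. -/
noncomputable def delta (S : Set E) : ℕ := by
  classical exact if Υ.Hyperbalanced S then 0 else 1

/-- The rank function of the matroid `M(Υ)`:
`rk(S) = n − b_Σ(S) + δ_Υ(S)`. -/
noncomputable def rk [Fintype V] (S : Set E) : ℕ :=
  Fintype.card V - Υ.bBal S + Υ.delta S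

/-- Matroid closure with respect to `rk`. -/
noncomputable def cl [Fintype V] (S : Set E) : Set E :=
  {e | Υ.rk (insert e S) = Υ.rk S}

/-- Two edges of `S` lie in the same edge component of `S`. -/
def econn (S : Set E) (e f : E) : Prop :=
  e ∈ S ∧ f ∈ S ∧ (e = f ∨ ∃ v w, Υ.touches e v ∧ Υ.touches f w ∧ Υ.conn S v w)

/-- `C` is an edge component of `S`. -/
def EdgeComponent (S C : Set E) : Prop := ∃ e ∈ S, C = {f | Υ.econn S e f}

/-- Sign switching by `ζ : V → {±1}`. -/
def signSwitch (ζ : V → ℤˣ) : GSGraph V E G where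
  shape := Υ.shape
  sign := fun e =>
    match Υ.shape e with
    | .link v w => ζ v * Υ.sign e * ζ w
    | _ => Υ.sign e
  tau1 := fun e =>
    match Υ.shape e with
    | .link v _ => ζ v * Υ.tau1 e
    | .half v => ζ v * Υ.tau1 e
    | .loose => Υ.tau1 e
  tau2 := fun e =>
    match Υ.shape e with
    | .link _ w => ζ w * Υ.tau2 e
    | _ => Υ.tau2 e
  gain := Υ.gain

/-- Gain switching by `θ : V → G`:
`φ^θ(e_{vw}) = τ(v,e)θ(v) + φ(e) + τ(w,e)θ(w)`. -/
def gainSwitch (θ : V → G) : GSGraph V E G where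
  shape := Υ.shape
  sign := Υ.sign
  tau1 := Υ.tau1
  tau2 := Υ.tau2
  gain := fun e =>
    match Υ.shape e with
    | .link v w => (Υ.tau1 e : ℤ) • θ v + Υ.gain e + (Υ.tau2 e : ℤ) • θ w
    | .half v => (Υ.tau1 e : ℤ) • θ v + Υ.gain e
    | .loose => Υ.gain e

/-- Reorientation by `ρ : E → {±1}`: negates the end signs and the gain of each
edge with `ρ e = -1`. -/
def reorient (ρ : E → ℤˣ) : GSGraph V E G where
  shape := Υ.shape
  sign := Υ.sign
  tau1 := fun e => ρ e * Υ.tau1 e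
  tau2 := fun e => ρ e * Υ.tau2 e
  gain := fun e => (ρ e : ℤ) • Υ.gain e

end GSGraph

end GSG

/- Let `A` be maximal hyperbalanced and `e ∉ A`. Then `A ∪ {e}` contains a non-neutral sign
circuit, necessarily through `e`. If `e` meets a sign-balanced component `K` of `A`, this circuit
cannot be a handcuff (deleting `e` would leave a negative figure of the handcuff in `A`, attached
to `K`), so it is a positive circle and `e` closes an `A`-walk of its own sign. Hence every walk
starting in `K` can be rerouted inside `A` with the same ends and sign, so `K` stays a balanced
component of every `B ⊇ A`, and `b_Σ(B) = b_Σ(A)`. As `δ` vanishes on `A` and equals `1` on every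
proper superset, `rk(B) = rk(A) + 1` for all `B ⊋ A`, which gives every claim. -/

theorem List.exists_eq_append_of_not_nodup_map {α β : Type*} {f : α → β} {l : List α}
    (h : ¬ (l.map f).Nodup) :
    ∃ x y l₁ l₂ l₃, l = l₁ ++ x :: (l₂ ++ y :: l₃) ∧ f x = f y := by
  obtain ⟨a, ha⟩ := not_forall_not.1 (mt List.nodup_iff_sublist.2 h)
  obtain ⟨l', hl', hmap⟩ := List.sublist_map_iff.1 ha
  rcases l' with _ | ⟨x, _ | ⟨y, _ | _⟩⟩ <;> simp only [List.map_cons, List.map_nil,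
    List.cons.injEq, reduceCtorEq, and_false, and_true] at hmap
  obtain ⟨r₁, r₂, rfl, hx, hy⟩ := List.cons_sublist_iff.1 hl'
  obtain ⟨l₁, l₂, rfl⟩ := List.append_of_mem hx
  obtain ⟨l₂', l₃, rfl⟩ := List.append_of_mem (List.singleton_sublist.1 hy)
  exact ⟨x, y, l₁, l₂ ++ l₂', l₃, by simp, hmap.1.symm.trans hmap.2⟩

namespace GSG

namespace GSGraph

variable {V E G : Type*} [AddCommGroup G]

variable (Υ : GSGraph V E G) in
inductive IsWalk (S : Set E) : V → List (DStep E) → V → Prop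
  | nil (u : V) : IsWalk S u [] u
  | cons {d : DStep E} {u p w : V} {l : List (DStep E)} :
      d.edge ∈ S → Υ.srcO d = some u → Υ.tgtO d = some p → IsWalk S p l w →
        IsWalk S u (d :: l) w

variable {Υ : GSGraph V E G} {S T A C F F₁ F₂ : Set E} {e : E} {u v w x y x₁ x₂ a b c c' : V}
  {W W₁ W₂ P : List (DStep E)} {Wu : UWalk V E}

theorem isWalk_cons_iff {d : DStep E} :
    Υ.IsWalk S u (d :: W) w ↔
      ∃ p, d.edge ∈ S ∧ Υ.srcO d = some u ∧ Υ.tgtO d = some p ∧ Υ.IsWalk S p W w := by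
  constructor
  · rintro (_ | ⟨he, hs, ht, hW⟩)
    exact ⟨_, he, hs, ht, hW⟩
  · rintro ⟨p, he, hs, ht, hW⟩
    exact .cons he hs ht hW

theorem IsWalk.eq_of_nil (h : Υ.IsWalk S u [] w) : u = w := by
  cases h; rfl

theorem IsWalk.append (h₁ : Υ.IsWalk S u W₁ w) (h₂ : Υ.IsWalk S w W₂ x) :
    Υ.IsWalk S u (W₁ ++ W₂) x := by
  induction h₁ with
  | nil => exact h₂
  | cons he hs ht _ ih => exact .cons he hs ht (ih h₂)

theorem IsWalk.of_append (h : Υ.IsWalk S u (W₁ ++ W₂) w) :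
    ∃ m, Υ.IsWalk S u W₁ m ∧ Υ.IsWalk S m W₂ w := by
  induction W₁ generalizing u with
  | nil => exact ⟨u, .nil _, h⟩
  | cons d l ih =>
    obtain ⟨p, he, hs, ht, hl⟩ := isWalk_cons_iff.1 h
    obtain ⟨m, h₁, h₂⟩ := ih hl
    exact ⟨m, .cons he hs ht h₁, h₂⟩

theorem IsWalk.edge_mem (h : Υ.IsWalk S u W w) : ∀ d ∈ W, d.edge ∈ S := by
  induction h with
  | nil => simp
  | cons he _ _ _ ih => exact List.forall_mem_cons.2 ⟨he, ih⟩

theorem srcO_flip (d : DStep E) : Υ.srcO ⟨d.edge, !d.fwd⟩ = Υ.tgtO d := by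
  unfold srcO tgtO
  cases Υ.shape d.edge <;> cases d.fwd <;> simp

theorem tgtO_flip (d : DStep E) : Υ.tgtO ⟨d.edge, !d.fwd⟩ = Υ.srcO d := by
  unfold srcO tgtO
  cases Υ.shape d.edge <;> cases d.fwd <;> simp

theorem IsWalk.reverse (h : Υ.IsWalk S u W w) : Υ.IsWalk S w (revWalk W) u := by
  induction h with
  | nil => exact .nil _
  | @cons d _ _ _ _ he hs ht _ ih =>
    have hflip : Υ.IsWalk S _ [⟨d.edge, !d.fwd⟩] _ :=
      .cons he ((srcO_flip d).trans ht) ((tgtO_flip d).trans hs) (.nil _)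
    simpa [revWalk] using ih.append hflip

theorem shape_eq_link_of_srcO_of_tgtO {d : DStep E} (hs : Υ.srcO d = some u)
    (ht : Υ.tgtO d = some w) :
    Υ.shape d.edge = .link u w ∨ Υ.shape d.edge = .link w u := by
  unfold srcO at hs
  unfold tgtO at ht
  rcases hsh : Υ.shape d.edge with ⟨a, b⟩ | _ | _ <;> simp only [hsh] at hs ht <;>
    cases hf : d.fwd <;> simp_all

theorem IsWalk.conn (h : Υ.IsWalk S u W w) : Υ.conn S u w := by
  induction h with
  | nil => exact .refl
  | cons he hs ht _ ih =>
    exact .head ⟨_, he, shape_eq_link_of_srcO_of_tgtO hs ht⟩ ih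

theorem conn_symm (h : Υ.conn S u w) : Υ.conn S w u := by
  induction h with
  | refl => exact .refl
  | tail _ hj ih =>
    obtain ⟨e, he, hsh⟩ := hj
    exact .head ⟨e, he, hsh.symm⟩ ih

theorem conn_mono (hST : S ⊆ T) (h : Υ.conn S u w) : Υ.conn T u w :=
  Relation.ReflTransGen.mono (fun _ _ ⟨e, he, hsh⟩ => ⟨e, hST he, hsh⟩) _ _ h

theorem exists_isWalk_of_conn (h : Υ.conn S u w) : ∃ W, Υ.IsWalk S u W w := by
  induction h with
  | refl => exact ⟨[], .nil _⟩
  | tail _ hj ih =>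
    obtain ⟨W, hW⟩ := ih
    obtain ⟨e, he, hsh | hsh⟩ := hj
    · exact ⟨W ++ [⟨e, true⟩], hW.append (.cons he (by simp [srcO, hsh])
        (by simp [tgtO, hsh]) (.nil _))⟩
    · exact ⟨W ++ [⟨e, false⟩], hW.append (.cons he (by simp [srcO, hsh])
        (by simp [tgtO, hsh]) (.nil _))⟩

theorem walkSign_cons (d : DStep E) (l : List (DStep E)) :
    Υ.walkSign (d :: l) = Υ.sign d.edge * Υ.walkSign l := by
  simp [walkSign]

theorem walkSign_append (W₁ W₂ : List (DStep E)) :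
    Υ.walkSign (W₁ ++ W₂) = Υ.walkSign W₁ * Υ.walkSign W₂ := by
  simp [walkSign]

theorem walkSign_revWalk (W : List (DStep E)) : Υ.walkSign (revWalk W) = Υ.walkSign W := by
  simp [walkSign, revWalk, List.prod_reverse, Function.comp_def]

theorem stepEdges_revWalk (W : List (DStep E)) : stepEdges (revWalk W) = stepEdges W := by
  ext; simp [stepEdges, revWalk, Function.comp_def]

theorem IsWalk.headSrc_eq (h : Υ.IsWalk S u W w) (hne : W ≠ []) : Υ.headSrc W = some u := by
  cases h with
  | nil => exact absurd rfl hne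
  | cons _ hs _ _ => simp [headSrc, hs]

theorem IsWalk.lastTgt_eq (h : Υ.IsWalk S u W w) (hne : W ≠ []) : Υ.lastTgt W = some w := by
  induction h with
  | nil => exact absurd rfl hne
  | @cons d _ _ _ l _ _ ht hl ih =>
    rcases eq_or_ne l [] with rfl | hl'
    · simp [lastTgt, ht, hl.eq_of_nil]
    · simpa [lastTgt, List.getLast?_cons, List.getLast?_eq_some_getLast hl'] using ih hl'

theorem IsWalk.isSteps (h : Υ.IsWalk S u W w) : Υ.IsSteps W := by
  induction h with
  | nil => exact ⟨by simp, List.isChain_nil⟩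
  | cons _ hs ht hl ih =>
    refine ⟨List.forall_mem_cons.2 ⟨?_, ih.1⟩, List.isChain_cons.2 ⟨?_, ih.2⟩⟩
    · rcases shape_eq_link_of_srcO_of_tgtO hs ht with h' | h' <;> exact ⟨_, _, h'⟩
    · rintro _ hd'
      cases hl with
      | nil => simp at hd'
      | cons _ hs' _ _ => simp_all

theorem isWalk_of_isSteps (hS : ∀ d ∈ W, d.edge ∈ S) (hW : Υ.IsSteps W)
    (hft : Υ.FromTo W u w) : Υ.IsWalk S u W w := by
  induction W generalizing u with
  | nil => rw [hft.1 rfl]; exact .nil _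
  | cons d l ih =>
    obtain ⟨hhead, hlast⟩ := hft.2 (List.cons_ne_nil _ _)
    obtain ⟨a, b, hsh⟩ := hW.1 d (by simp)
    obtain ⟨t, ht⟩ : ∃ t, Υ.tgtO d = some t := by simp [tgtO, hsh]
    refine .cons (hS d (by simp)) (by simpa [headSrc] using hhead) ht ?_
    rcases eq_or_ne l [] with rfl | hl
    · obtain rfl : t = w := by simpa [lastTgt, ht] using hlast
      exact .nil _
    · refine ih (fun d' hd' => hS d' (by simp [hd'])) ⟨fun d' hd' => hW.1 d' (by simp [hd']),
        (List.isChain_cons.1 hW.2).2⟩ ⟨fun h => absurd h hl, fun _ => ⟨?_, ?_⟩⟩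
      · have := (List.isChain_cons.1 hW.2).1 (l.head hl) (by simp [List.head?_eq_some_head hl])
        simpa [headSrc, List.head?_eq_some_head hl, ← ht] using this.symm
      · simpa [lastTgt, List.getLast?_cons, List.getLast?_eq_some_getLast hl] using hlast

theorem IsWalk.exists_split_of_not_nodup_srcO (h : Υ.IsWalk S u W u)
    (hdup : ¬ (W.map Υ.srcO).Nodup) :
    ∃ m W₁ W₂, Υ.IsWalk S m W₁ m ∧ Υ.IsWalk S u W₂ u ∧ Υ.conn S u m ∧
      W₁.length < W.length ∧ W₂.length < W.length ∧
      Υ.walkSign W = Υ.walkSign W₁ * Υ.walkSign W₂ := by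
  obtain ⟨d₁, d₂, U₁, U₂, U₃, rfl, hsrc⟩ := List.exists_eq_append_of_not_nodup_map hdup
  obtain ⟨m, hU₁, hrest⟩ := h.of_append
  obtain ⟨p, he₁, hs₁, ht₁, hrest⟩ := isWalk_cons_iff.1 hrest
  obtain ⟨q, hU₂, hrest⟩ := hrest.of_append
  obtain ⟨r, he₂, hs₂, ht₂, hU₃⟩ := isWalk_cons_iff.1 hrest
  obtain rfl : q = m := Option.some_injective _ (hs₂.symm.trans (hsrc.symm.trans hs₁))
  refine ⟨q, d₁ :: U₂, U₁ ++ d₂ :: U₃, .cons he₁ hs₁ ht₁ hU₂,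
    hU₁.append (.cons he₂ hs₂ ht₂ hU₃), hU₁.conn, by simp; omega, by simp, ?_⟩
  simp only [walkSign_append, walkSign_cons]
  ac_rfl

/-- With distinct vertices, a repeated edge can only be traversed back and forth in
two consecutive steps, which cancel in the sign. -/
theorem IsWalk.exists_shorter_of_not_nodup_edge (h : Υ.IsWalk S u W u)
    (hsrc : (W.map Υ.srcO).Nodup) (hdup : ¬ (W.map DStep.edge).Nodup) :
    ∃ W', Υ.IsWalk S u W' u ∧ W'.length < W.length ∧ Υ.walkSign W = Υ.walkSign W' := by
  obtain ⟨d₁, d₂, U₁, U₂, U₃, rfl, hedge⟩ := List.exists_eq_append_of_not_nodup_map hdup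
  obtain ⟨m, hU₁, hrest⟩ := h.of_append
  obtain ⟨p, he₁, hs₁, ht₁, hrest⟩ := isWalk_cons_iff.1 hrest
  obtain ⟨q, hU₂, hrest⟩ := hrest.of_append
  obtain ⟨r, he₂, hs₂, ht₂, hU₃⟩ := isWalk_cons_iff.1 hrest
  have hne : ∀ a b, List.Sublist [a, b] ((U₁ ++ d₁ :: (U₂ ++ d₂ :: U₃)).map Υ.srcO) → a ≠ b :=
    fun a b hab => by simpa using hsrc.sublist hab
  have hmq : m ≠ q := fun hmq => hne (Υ.srcO d₁) (Υ.srcO d₂) (by simp) (by rw [hs₁, hs₂, hmq])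
  obtain ⟨rfl, rfl⟩ : q = p ∧ r = m := by
    have h₁ := shape_eq_link_of_srcO_of_tgtO hs₁ ht₁
    have h₂ := shape_eq_link_of_srcO_of_tgtO hs₂ ht₂
    rw [← hedge] at h₂
    rcases h₁ with h₁ | h₁ <;> rcases h₂ with h₂ | h₂ <;> rw [h₁] at h₂ <;> cases h₂ <;>
      first | exact absurd rfl hmq | exact ⟨rfl, rfl⟩
  obtain rfl : U₂ = [] := by
    cases hU₂ with
    | nil => rfl
    | @cons d _ _ _ _ _ hs _ _ =>
      exact absurd (by rw [hs, hs₂]) (hne (Υ.srcO d) (Υ.srcO d₂) (by simp))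
  refine ⟨U₁ ++ U₃, hU₁.append hU₃, by simp, ?_⟩
  simp only [walkSign_append, walkSign_cons, List.nil_append, ← hedge]
  rw [← mul_assoc (Υ.sign _), Int.units_mul_self, one_mul]

theorem BalancedAt.walkSign_eq_one (hbal : Υ.BalancedAt S v) (h : Υ.IsWalk S u W u)
    (hu : Υ.conn S v u) : Υ.walkSign W = 1 := by
  induction hn : W.length using Nat.strong_induction_on generalizing u W with
  | _ n ih =>
  subst hn
  rcases eq_or_ne W [] with rfl | hne
  · rfl
  by_cases hsrc : (W.map Υ.srcO).Nodup
  · by_cases hedge : (W.map DStep.edge).Nodup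
    · exact hbal.2 W ⟨hne, h.isSteps, by rw [h.lastTgt_eq hne, h.headSrc_eq hne], hedge, hsrc⟩
        h.edge_mem ⟨u, h.headSrc_eq hne, hu⟩
    · obtain ⟨W', hW', hlt, hsign⟩ := h.exists_shorter_of_not_nodup_edge hsrc hedge
      rw [hsign, ih _ hlt hW' hu rfl]
  · obtain ⟨m, W₁, W₂, h₁, h₂, hum, hlt₁, hlt₂, hsign⟩ := h.exists_split_of_not_nodup_srcO hsrc
    rw [hsign, ih _ hlt₁ h₁ (hu.trans hum) rfl, ih _ hlt₂ h₂ hu rfl, mul_one]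

theorem touches_iff_of_shape_eq_link {a b : V} (h : Υ.shape e = .link a b) :
    Υ.touches e y ↔ y = a ∨ y = b := by
  simp [touches, h]

theorem IsWalk.of_insert (h : Υ.IsWalk (insert e A) u W w) (he : e ∉ stepEdges W) :
    Υ.IsWalk A u W w := by
  induction h with
  | nil => exact .nil _
  | @cons d _ _ _ _ hd hs ht _ ih =>
    have hde : d.edge ≠ e := fun hde => he (hde ▸ List.mem_cons_self ..)
    exact .cons (hd.resolve_left hde) hs ht (ih fun h' => he (List.mem_cons_of_mem _ h'))

theorem IsWalk.exists_split_of_mem (h : Υ.IsWalk (insert e A) u W w)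
    (hnd : (W.map DStep.edge).Nodup) (he : e ∈ stepEdges W) :
    ∃ d m t pre post, W = pre ++ d :: post ∧ d.edge = e ∧
      Υ.srcO d = some m ∧ Υ.tgtO d = some t ∧ Υ.IsWalk A u pre m ∧ Υ.IsWalk A t post w := by
  obtain ⟨d, hdW, rfl⟩ := List.mem_map.1 he
  obtain ⟨pre, post, rfl⟩ := List.append_of_mem hdW
  obtain ⟨m, hpre, hrest⟩ := h.of_append
  obtain ⟨t, -, hs, ht, hpost⟩ := isWalk_cons_iff.1 hrest
  rw [List.map_append, List.map_cons, List.nodup_middle, List.nodup_cons, List.mem_append] at hnd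
  exact ⟨d, m, t, pre, post, rfl, rfl, hs, ht, hpre.of_insert fun h => hnd.1 (.inl h),
    hpost.of_insert fun h => hnd.1 (.inr h)⟩

theorem IsWalk.conn_end_of_mem (h : Υ.IsWalk (insert e A) u W w)
    (hnd : (W.map DStep.edge).Nodup) (he : e ∈ stepEdges W) (hy : Υ.touches e y)
    (hvy : Υ.conn A v y) : Υ.conn A v u ∨ Υ.conn A v w := by
  obtain ⟨d, m, t, pre, post, -, rfl, hs, ht, hpre, hpost⟩ := h.exists_split_of_mem hnd he
  rcases shape_eq_link_of_srcO_of_tgtO hs ht with hsh | hsh <;>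
    rcases (touches_iff_of_shape_eq_link hsh).1 hy with rfl | rfl
  exacts [.inl (hvy.trans (conn_symm hpre.conn)), .inr (hvy.trans hpost.conn),
    .inr (hvy.trans hpost.conn), .inl (hvy.trans (conn_symm hpre.conn))]

theorem IsCircleWalk.isWalk (hW : Υ.IsCircleWalk W) (hx : Υ.headSrc W = some u)
    (hS : ∀ d ∈ W, d.edge ∈ S) : Υ.IsWalk S u W u :=
  isWalk_of_isSteps hS hW.2.1 ⟨fun h => absurd h hW.1, fun _ => ⟨hx, hW.2.2.1.trans hx⟩⟩

theorem IsSteps.notMem_stepEdges (hW : Υ.IsSteps W) (h : Υ.shape e = .half u) :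
    e ∉ stepEdges W := fun he => by
  obtain ⟨d, hd, rfl⟩ := List.mem_map.1 he
  obtain ⟨a, b, h'⟩ := hW.1 d hd
  rw [h] at h'
  cases h'

variable (Υ) in
/-- The two kinds of end of a handcuff. -/
def IsNegFigure (x : V) (F : Set E) : Prop :=
  (∃ h, Υ.shape h = .half x ∧ F = {h}) ∨
  (∃ W, Υ.IsCircleWalk W ∧ Υ.walkSign W = -1 ∧ Υ.headSrc W = some x ∧ F = stepEdges W)

theorem BalancedAt.not_conn_of_isNegFigure (hbal : Υ.BalancedAt A v)
    (hF : Υ.IsNegFigure x F) (hFA : F ⊆ A) : ¬ Υ.conn A v x := by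
  rcases hF with ⟨h, hsh, rfl⟩ | ⟨W, hW, hsgn, hx, rfl⟩
  · exact hbal.1 h (hFA rfl) x hsh
  · intro hvx
    have := hbal.2 W hW (fun d hd => hFA (List.mem_map_of_mem hd)) ⟨x, hx, hvx⟩
    rw [hsgn] at this
    exact absurd this (by decide)

theorem IsNegFigure.conn_of_mem (hF : Υ.IsNegFigure x F) (hFA : F ⊆ insert e A)
    (he : e ∈ F) (hy : Υ.touches e y) (hvy : Υ.conn A v y) : Υ.conn A v x := by
  rcases hF with ⟨h, hsh, rfl⟩ | ⟨W, hW, -, hx, rfl⟩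
  · rw [Set.mem_singleton_iff.1 he] at hy
    simp only [touches, hsh] at hy
    rwa [← hy]
  · rcases (hW.isWalk hx fun d hd => hFA (List.mem_map_of_mem hd)).conn_end_of_mem
      hW.2.2.2.1 he hy hvy with h | h <;> exact h

theorem BalancedAt.notMem_of_isNegFigure (hbal : Υ.BalancedAt A v)
    (hF₁ : Υ.IsNegFigure x₁ F₁) (hF₂ : Υ.IsNegFigure x₂ F₂)
    (hP : Υ.IsWalk (insert e A) x₁ P x₂) (hF₁A : F₁ ⊆ insert e A) (hF₂A : F₂ ⊆ insert e A)
    (heP : e ∉ stepEdges P) (he₂ : e ∉ F₂) (hy : Υ.touches e y) (hvy : Υ.conn A v y) :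
    e ∉ F₁ := fun he₁ =>
  hbal.not_conn_of_isNegFigure hF₂ ((Set.subset_insert_iff_of_notMem he₂).1 hF₂A)
    ((hF₁.conn_of_mem hF₁A he₁ hy hvy).trans (hP.of_insert heP).conn)

/-- Deleting `e` would leave one of the two negative figures in `A`, joined to the
balanced component. -/
theorem BalancedAt.notMem_handcuff (hbal : Υ.BalancedAt A v)
    (hF₁ : Υ.IsNegFigure x₁ F₁) (hF₂ : Υ.IsNegFigure x₂ F₂)
    (hP : Υ.IsWalk (insert e A) x₁ P x₂) (hPnd : (P.map DStep.edge).Nodup)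
    (hsub : F₁ ∪ stepEdges P ∪ F₂ ⊆ insert e A) (h₁P : Disjoint F₁ (stepEdges P))
    (h₁₂ : Disjoint F₁ F₂) (hP₂ : Disjoint (stepEdges P) F₂) (hy : Υ.touches e y)
    (hvy : Υ.conn A v y) : e ∉ F₁ ∪ stepEdges P ∪ F₂ := by
  have hF₁A : F₁ ⊆ insert e A := fun f hf => hsub (.inl (.inl hf))
  have hF₂A : F₂ ⊆ insert e A := fun f hf => hsub (.inr hf)
  rintro ((he | he) | he)
  · exact hbal.notMem_of_isNegFigure hF₁ hF₂ hP hF₁A hF₂A (h₁P.notMem_of_mem_left he)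
      (h₁₂.notMem_of_mem_left he) hy hvy he
  · have hF₁A' := (Set.subset_insert_iff_of_notMem (h₁P.notMem_of_mem_right he)).1 hF₁A
    have hF₂A' := (Set.subset_insert_iff_of_notMem (hP₂.notMem_of_mem_left he)).1 hF₂A
    rcases hP.conn_end_of_mem hPnd he hy hvy with h | h
    exacts [hbal.not_conn_of_isNegFigure hF₁ hF₁A' h, hbal.not_conn_of_isNegFigure hF₂ hF₂A' h]
  · exact hbal.notMem_of_isNegFigure hF₂ hF₁ hP.reverse hF₂A hF₁A
      (by rw [stepEdges_revWalk]; exact hP₂.notMem_of_mem_right he)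
      (h₁₂.notMem_of_mem_right he) hy hvy he

theorem exists_isWalk_of_ends (h₁ : Υ.shape e = .link a b ∨ Υ.shape e = .link b a)
    (h₂ : Υ.shape e = .link c c' ∨ Υ.shape e = .link c' c) (hW : Υ.IsWalk S a W b) :
    ∃ W', Υ.IsWalk S c W' c' ∧ Υ.walkSign W' = Υ.walkSign W := by
  rcases h₁ with h₁ | h₁ <;> rcases h₂ with h₂ | h₂ <;> rw [h₁] at h₂ <;> cases h₂
  exacts [⟨W, hW, rfl⟩, ⟨revWalk W, hW.reverse, walkSign_revWalk W⟩,
    ⟨revWalk W, hW.reverse, walkSign_revWalk W⟩, ⟨W, hW, rfl⟩]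

/-- Going round a positive circle the other way from an edge `e` gives a walk of the
same sign as `e`. -/
theorem exists_isWalk_of_isPosCircleWalk (hW : Υ.IsPosCircleWalk Wu)
    (hsub : uedges Wu ⊆ insert e A) (he : e ∈ uedges Wu) :
    ∃ a b W, Υ.shape e = .link a b ∧ Υ.IsWalk A a W b ∧ Υ.walkSign W = Υ.sign e := by
  obtain ⟨hfh, hlh, hc, hsgn, hh, -⟩ := hW
  have hu : uedges Wu = stepEdges Wu.steps := by ext; simp [uedges, stepEdges, hfh, hlh]
  rw [hu] at hsub he
  obtain ⟨d, m, t, pre, post, hsplit, rfl, hs, ht, hpre, hpost⟩ :=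
    (hc.isWalk hh fun d hd => hsub (List.mem_map_of_mem hd)).exists_split_of_mem
      hc.2.2.2.1 he
  obtain ⟨a, b, hab⟩ := hc.2.1.1 d (by simp [hsplit])
  obtain ⟨W, hW, hsgnW⟩ := exists_isWalk_of_ends (shape_eq_link_of_srcO_of_tgtO hs ht).symm
    (.inl hab) (hpost.append hpre)
  refine ⟨a, b, W, hab, hW, ?_⟩
  rw [hsplit, walkSign_append, walkSign_cons] at hsgn
  have h : Υ.sign d.edge * (Υ.walkSign post * Υ.walkSign pre) = 1 := by
    rw [← hsgn]; ac_rfl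
  rw [hsgnW, walkSign_append, eq_inv_of_mul_eq_one_left h, Int.units_inv_eq_self]

theorem BalancedAt.notMem_uedges_of_isHandcuffWalk (hbal : Υ.BalancedAt A v)
    (hW : Υ.IsHandcuffWalk (-1) (-1) Wu) (hsub : uedges Wu ⊆ insert e A)
    (hy : Υ.touches e y) (hvy : Υ.conn A v y) : e ∉ uedges Wu := by
  rcases hW with ⟨W₁, P, W₂, u₁, u₂, hfh, hlh, hsteps, -, hc₁, hs₁, hh₁, hc₂, hs₂, hh₂, hP,
      hPft, -, -, -, -, hnd⟩ |
    ⟨e₁, P, W₂, u₂, hfh, hlh, hsh₁, -, -, hsteps, -, hc₂, hs₂, hh₂, hP, hPft, -, -, hnd⟩ |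
    ⟨e₁, e₂, hfh, hlh, hne, hsh₁, hsh₂, -, -, hP, hPft⟩
  · have hu : uedges Wu = stepEdges W₁ ∪ stepEdges P ∪ stepEdges W₂ := by
      ext; simp [uedges, stepEdges, hfh, hlh, hsteps, revWalk]; grind
    rw [hu] at hsub ⊢
    rw [List.map_append, List.map_append, List.nodup_append, List.nodup_append] at hnd
    exact hbal.notMem_handcuff (.inr ⟨W₁, hc₁, hs₁, hh₁, rfl⟩) (.inr ⟨W₂, hc₂, hs₂, hh₂, rfl⟩)
      (isWalk_of_isSteps (fun d hd => hsub (.inl (.inr (List.mem_map_of_mem hd)))) hP.1 hPft)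
      hP.2.1 hsub (Set.disjoint_left.2 fun f h₁ h₂ => hnd.1.2.2 f h₁ f h₂ rfl)
      (Set.disjoint_left.2 fun f h₁ h₂ => hnd.2.2 f (List.mem_append_left _ h₁) f h₂ rfl)
      (Set.disjoint_left.2 fun f h₁ h₂ => hnd.2.2 f (List.mem_append_right _ h₁) f h₂ rfl)
      hy hvy
  · have hu : uedges Wu = {e₁} ∪ stepEdges P ∪ stepEdges W₂ := by
      ext; simp [uedges, stepEdges, hfh, hlh, hsteps, revWalk]; grind
    rw [hu] at hsub ⊢
    rw [List.map_append, List.nodup_append] at hnd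
    exact hbal.notMem_handcuff (.inl ⟨e₁, hsh₁, rfl⟩) (.inr ⟨W₂, hc₂, hs₂, hh₂, rfl⟩)
      (isWalk_of_isSteps (fun d hd => hsub (.inl (.inr (List.mem_map_of_mem hd)))) hP.1 hPft)
      hP.2.1 hsub (Set.disjoint_singleton_left.2 (hP.1.notMem_stepEdges hsh₁))
      (Set.disjoint_singleton_left.2 (hc₂.2.1.notMem_stepEdges hsh₁))
      (Set.disjoint_left.2 fun f h₁ h₂ => hnd.2.2 f h₁ f h₂ rfl) hy hvy
  · have hu : uedges Wu = {e₁} ∪ stepEdges Wu.steps ∪ {e₂} := by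
      ext; simp [uedges, stepEdges, hfh, hlh]; grind
    rw [hu] at hsub ⊢
    exact hbal.notMem_handcuff (.inl ⟨e₁, hsh₁, rfl⟩) (.inl ⟨e₂, hsh₂, rfl⟩)
      (isWalk_of_isSteps (fun d hd => hsub (.inl (.inr (List.mem_map_of_mem hd)))) hP.1 hPft)
      hP.2.1 hsub (Set.disjoint_singleton_left.2 (hP.1.notMem_stepEdges hsh₁))
      (Set.disjoint_singleton.2 hne)
      (Set.disjoint_singleton_right.2 (hP.1.notMem_stepEdges hsh₂)) hy hvy

/-- Such a circuit can only be a positive circle. -/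
theorem BalancedAt.exists_isWalk_of_signCircuit (hbal : Υ.BalancedAt A v)
    (hC : Υ.SignCircuit C) (hCA : C ⊆ insert e A) (he : e ∈ C) (hy : Υ.touches e y)
    (hvy : Υ.conn A v y) :
    ∃ a b W, Υ.shape e = .link a b ∧ Υ.IsWalk A a W b ∧ Υ.walkSign W = Υ.sign e := by
  rcases hC with ⟨g, hg, rfl⟩ | ⟨Wu, hWu | hWu, rfl⟩
  · rw [Set.mem_singleton_iff.1 he] at hy
    simp [touches, hg] at hy
  · exact exists_isWalk_of_isPosCircleWalk hWu hCA he
  · exact absurd he (hbal.notMem_uedges_of_isHandcuffWalk hWu hCA hy hvy)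

theorem exists_signCircuit_mem_of_not_hyperbalanced_insert (hA : Υ.Hyperbalanced A)
    (h : ¬ Υ.Hyperbalanced (insert e A)) : ∃ C ⊆ insert e A, Υ.SignCircuit C ∧ e ∈ C := by
  simp only [Hyperbalanced, not_forall] at h
  obtain ⟨C, hCA, hC, hneutral⟩ := h
  exact ⟨C, hCA, hC, by_contra fun he =>
    hneutral (hA C ((Set.subset_insert_iff_of_notMem he).1 hCA) hC)⟩

theorem BalancedAt.exists_isWalk_of_touches (hA : Maximal Υ.Hyperbalanced A)
    (hbal : Υ.BalancedAt A v) (hy : Υ.touches e y) (hvy : Υ.conn A v y) :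
    ∃ a b W, Υ.shape e = .link a b ∧ Υ.IsWalk A a W b ∧ Υ.walkSign W = Υ.sign e := by
  by_cases he : e ∈ A
  · rcases hsh : Υ.shape e with ⟨a, b⟩ | x | -
    · exact ⟨a, b, [⟨e, true⟩], rfl,
        .cons he (by simp [srcO, hsh]) (by simp [tgtO, hsh]) (.nil _), by simp [walkSign]⟩
    · simp only [touches, hsh] at hy
      exact absurd (hy ▸ hvy) (hbal.1 e he x hsh)
    · simp [touches, hsh] at hy
  · obtain ⟨C, hCA, hC, heC⟩ := exists_signCircuit_mem_of_not_hyperbalanced_insert hA.prop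
      (hA.not_prop_of_gt (Set.ssubset_insert he))
    exact hbal.exists_isWalk_of_signCircuit hC hCA heC hy hvy

theorem BalancedAt.exists_isWalk_of_step (hA : Maximal Υ.Hyperbalanced A)
    (hbal : Υ.BalancedAt A v) {d : DStep E} (hs : Υ.srcO d = some u) (ht : Υ.tgtO d = some w)
    (hvu : Υ.conn A v u) : ∃ W, Υ.IsWalk A u W w ∧ Υ.walkSign W = Υ.sign d.edge := by
  have hd := shape_eq_link_of_srcO_of_tgtO hs ht
  obtain ⟨a, b, W, hab, hW, hsgn⟩ := hbal.exists_isWalk_of_touches hA (e := d.edge)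
    (by rcases hd with h | h <;> simp [touches, h]) hvu
  obtain ⟨W', hW', hsgn'⟩ := exists_isWalk_of_ends (.inl hab) hd hW
  exact ⟨W', hW', hsgn'.trans hsgn⟩

theorem BalancedAt.exists_isWalk_of_isWalk (hA : Maximal Υ.Hyperbalanced A)
    (hbal : Υ.BalancedAt A v) (h : Υ.IsWalk S u W w) (hvu : Υ.conn A v u) :
    ∃ W', Υ.IsWalk A u W' w ∧ Υ.walkSign W' = Υ.walkSign W := by
  induction h with
  | nil => exact ⟨[], .nil _, rfl⟩
  | cons _ hs ht _ ih =>
    obtain ⟨W₁, hW₁, hsgn₁⟩ := hbal.exists_isWalk_of_step hA hs ht hvu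
    obtain ⟨W₂, hW₂, hsgn₂⟩ := ih (hvu.trans hW₁.conn)
    exact ⟨W₁ ++ W₂, hW₁.append hW₂, by rw [walkSign_append, walkSign_cons, hsgn₁, hsgn₂]⟩

theorem BalancedAt.conn_of_maximal (hA : Maximal Υ.Hyperbalanced A)
    (hbal : Υ.BalancedAt A v) (h : Υ.conn S v y) : Υ.conn A v y := by
  obtain ⟨W, hW⟩ := exists_isWalk_of_conn h
  obtain ⟨W', hW', -⟩ := hbal.exists_isWalk_of_isWalk hA hW .refl
  exact hW'.conn

theorem BalancedAt.of_maximal (hA : Maximal Υ.Hyperbalanced A) (hbal : Υ.BalancedAt A v) :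
    Υ.BalancedAt S v := by
  refine ⟨fun g _ x hsh hvx => ?_, fun W hW hWS ⟨x, hx, hvx⟩ => ?_⟩
  · obtain ⟨a, b, -, hab, -⟩ := hbal.exists_isWalk_of_touches hA (e := g) (y := x)
      (by simp [touches, hsh]) (hbal.conn_of_maximal hA hvx)
    rw [hsh] at hab
    cases hab
  · have hvx' := hbal.conn_of_maximal hA hvx
    obtain ⟨W', hW', hsgn⟩ := hbal.exists_isWalk_of_isWalk hA (hW.isWalk hx hWS) hvx'
    rw [← hsgn, hbal.walkSign_eq_one hW' hvx']

theorem BalancedAt.anti (h : Υ.BalancedAt T v) (hST : S ⊆ T) : Υ.BalancedAt S v :=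
  ⟨fun g hg x hsh hvx => h.1 g (hST hg) x hsh (conn_mono hST hvx),
    fun W hW hWS ⟨x, hx, hvx⟩ =>
      h.2 W hW (fun d hd => hST (hWS d hd)) ⟨x, hx, conn_mono hST hvx⟩⟩

theorem bBal_eq_of_maximal (hA : Maximal Υ.Hyperbalanced A) (hAS : A ⊆ S) :
    Υ.bBal S = Υ.bBal A := by
  have hcomp : ∀ w, Υ.BalancedAt A w → Υ.comp S w = Υ.comp A w := fun w hw =>
    Set.ext fun _ => ⟨hw.conn_of_maximal hA, conn_mono hAS⟩
  have hbal : ∀ X, (∃ w, X = Υ.comp S w ∧ Υ.BalancedAt S w) ↔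
      (∃ w, X = Υ.comp A w ∧ Υ.BalancedAt A w) := fun X =>
    ⟨fun ⟨w, hX, hw⟩ => ⟨w, hX.trans (hcomp w (hw.anti hAS)), hw.anti hAS⟩,
      fun ⟨w, hX, hw⟩ => ⟨w, hX.trans (hcomp w hw).symm, hw.of_maximal hA⟩⟩
  simp only [bBal, hbal]

theorem rk_of_hyperbalanced [Fintype V] (h : Υ.Hyperbalanced S) :
    Υ.rk S = Fintype.card V - Υ.bBal S := by
  simp [rk, delta, h]

theorem rk_of_not_hyperbalanced [Fintype V] (h : ¬ Υ.Hyperbalanced S) :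
    Υ.rk S = Fintype.card V - Υ.bBal S + 1 := by
  simp [rk, delta, h]

theorem rk_eq_add_one_of_maximal_of_ssubset [Fintype V] (hA : Maximal Υ.Hyperbalanced A)
    (hAS : A ⊂ S) : Υ.rk S = Υ.rk A + 1 := by
  rw [rk_of_not_hyperbalanced (hA.not_prop_of_gt hAS), rk_of_hyperbalanced hA.prop,
    bBal_eq_of_maximal hA hAS.subset]

end GSGraph

theorem maximal_hyperbalanced_is_coatom_general
    {V E G : Type*} [AddCommGroup G] [Fintype V]
    (Υ : GSGraph V E G)
    (hfrust : ¬ Υ.Hyperbalanced (Set.univ : Set E))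
    (A : Set E) (hA : Υ.Hyperbalanced A)
    (hmax : ∀ B, Υ.Hyperbalanced B → A ⊆ B → B = A) :
    Υ.bBal A = Υ.bBal (Set.univ : Set E) ∧
    Υ.rk A + 1 = Υ.rk (Set.univ : Set E) ∧
    Υ.rk A = Fintype.card V - Υ.bBal (Set.univ : Set E) ∧
    Υ.cl A = A ∧
    (∀ e ∉ A, Υ.cl (insert e A) = Set.univ) := by
  have hAmax : Maximal Υ.Hyperbalanced A := ⟨hA, fun B hB hAB => (hmax B hB hAB).le⟩
  have hAU : A ⊂ Set.univ := Set.ssubset_univ_iff.2 fun h => hfrust (h ▸ hA)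
  have hb : Υ.bBal A = Υ.bBal Set.univ := (GSGraph.bBal_eq_of_maximal hAmax hAU.subset).symm
  have hrk : ∀ B, A ⊂ B → Υ.rk B = Υ.rk A + 1 := fun B =>
    GSGraph.rk_eq_add_one_of_maximal_of_ssubset hAmax
  refine ⟨hb, (hrk _ hAU).symm, by rw [GSGraph.rk_of_hyperbalanced hA, hb], ?_, fun e he => ?_⟩
  · refine Set.Subset.antisymm (fun e h => by_contra fun he => ?_) fun e he => ?_
    · have h' : Υ.rk (insert e A) = Υ.rk A := h
      rw [hrk _ (Set.ssubset_insert he)] at h'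
      omega
    · show Υ.rk (insert e A) = Υ.rk A
      rw [Set.insert_eq_of_mem he]
  · have heA := Set.ssubset_insert he
    refine Set.eq_univ_of_forall fun f => ?_
    show Υ.rk (insert f (insert e A)) = Υ.rk (insert e A)
    rw [hrk _ (heA.trans_subset (Set.subset_insert _ _)), hrk _ heA]

/-- If `Υ` is hyperfrustrated, every maximal hyperbalanced edge
set `A` is a coatom of the lattice of flats of `M(Υ)`, with
`b_Σ(A) = b_Σ(E)` and `rk(A) = rk(E) − 1 = n − b_Σ(E)`.  (A coatom is a flat
of rank `rk(E) − 1` such that adjoining any outside edge closes to all of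
`E`.) -/
theorem maximal_hyperbalanced_is_coatom
    {V E G : Type*} [AddCommGroup G] [Fintype V] [Fintype E]
    (Υ : GSGraph V E G) (hΥ : Υ.Proper)
    (hfrust : ¬ Υ.Hyperbalanced (Set.univ : Set E))
    (A : Set E) (hA : Υ.Hyperbalanced A)
    (hmax : ∀ B, Υ.Hyperbalanced B → A ⊆ B → B = A) :
    Υ.bBal A = Υ.bBal (Set.univ : Set E) ∧
    Υ.rk A + 1 = Υ.rk (Set.univ : Set E) ∧
    Υ.rk A = Fintype.card V - Υ.bBal (Set.univ : Set E) ∧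
    Υ.cl A = A ∧
    (∀ e ∉ A, Υ.cl (insert e A) = Set.univ) :=
  maximal_hyperbalanced_is_coatom_general Υ hfrust A hA hmax

end GSG
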